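/- arXiv:1606.09455 — 4 statements merged into one kernel-verified Lean document; each statement's English description precedes it below -/
import Mathlib

section
/- Define the unguarded size us of types by us(▶A) = 0 and otherwise the usual type size (us(base) = 1, us of binary formers = 1 + sum of subterms, us(μα.A) = 1 + us(A), us(■A) = 1 + us(A), us(α) = 1). If the type variable α is guarded in A (every occurrence of α lies beneath a ▶ in the syntax tree of A), then us(A[B/α]) ≤ us(A) for every type B. -/
/-- Types of the guarded lambda calculus:
`A ::= α | N | 1 | A×A | 0 | A+A | A→A | μα.A | ▶A | ■A`
(with named type variables; `■A` is only formed for closed `A`). -/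
inductive GTy : Type
  | var (x : ℕ)
  | natT
  | unitT
  | emptyT
  | prod (A B : GTy)
  | sum (A B : GTy)
  | arrow (A B : GTy)
  | mu (x : ℕ) (A : GTy)
  | later (A : GTy)
  | box (A : GTy)

/-- Substitution `A[B/α]` of `B` for the free occurrences of variable `α` in `A`.
Since `■C` is only formed for closed `C`, substitution does not proceed under `■`. -/
def GTy.subst : GTy → GTy → ℕ → GTy
  | .var y, B, a => if y = a then B else .var y
  | .natT, _, _ => .natT
  | .unitT, _, _ => .unitT
  | .emptyT, _, _ => .emptyT
  | .prod A1 A2, B, a => .prod (A1.subst B a) (A2.subst B a)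
  | .sum A1 A2, B, a => .sum (A1.subst B a) (A2.subst B a)
  | .arrow A1 A2, B, a => .arrow (A1.subst B a) (A2.subst B a)
  | .mu x A, B, a => if x = a then .mu x A else .mu x (A.subst B a)
  | .later A, B, a => .later (A.subst B a)
  | .box A, _, _ => .box A

/-- `α` is guarded in `A`: every free occurrence of `α` in `A` lies beneath an
occurrence of `▶` in the syntax tree of `A`.  (Under `μx` with `x = α`, and under
`■` — which requires a closed type — there are no free occurrences of `α`.) -/
def GTy.guardedIn (a : ℕ) : GTy → Prop
  | .var y => y ≠ a
  | .natT => True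
  | .unitT => True
  | .emptyT => True
  | .prod A1 A2 => A1.guardedIn a ∧ A2.guardedIn a
  | .sum A1 A2 => A1.guardedIn a ∧ A2.guardedIn a
  | .arrow A1 A2 => A1.guardedIn a ∧ A2.guardedIn a
  | .mu x A => x = a ∨ A.guardedIn a
  | .later _ => True
  | .box _ => True

/-- Unguarded size: `us(▶A) = 0`, and otherwise the usual type size. -/
def GTy.us : GTy → ℕ
  | .var _ => 1
  | .natT => 1
  | .unitT => 1
  | .emptyT => 1
  | .prod A1 A2 => 1 + A1.us + A2.us
  | .sum A1 A2 => 1 + A1.us + A2.us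
  | .arrow A1 A2 => 1 + A1.us + A2.us
  | .mu _ A => 1 + A.us
  | .later _ => 0
  | .box A => 1 + A.us

/-- If `α` is guarded in `A`, then `us(A[B/α]) ≤ us(A)` for every type `B`. -/
theorem us_subst_le_of_guarded (a : ℕ) (A B : GTy) (h : A.guardedIn a) :
    (A.subst B a).us ≤ A.us := by
  induction A with
  | var y => simp [GTy.subst, GTy.guardedIn] at h ⊢; simp [h, GTy.us]
  | natT => simp [GTy.subst]
  | unitT => simp [GTy.subst]
  | emptyT => simp [GTy.subst]
  | prod A1 A2 ih1 ih2 =>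
    obtain ⟨h1, h2⟩ := h
    simp only [GTy.subst, GTy.us]
    have := ih1 h1; have := ih2 h2; omega
  | sum A1 A2 ih1 ih2 =>
    obtain ⟨h1, h2⟩ := h
    simp only [GTy.subst, GTy.us]
    have := ih1 h1; have := ih2 h2; omega
  | arrow A1 A2 ih1 ih2 =>
    obtain ⟨h1, h2⟩ := h
    simp only [GTy.subst, GTy.us]
    have := ih1 h1; have := ih2 h2; omega
  | mu x A ih =>
    simp only [GTy.subst]
    by_cases hx : x = a
    · simp [hx]
    · simp only [hx, if_false, GTy.us]
      rcases h with h | h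
      · exact absurd h hx
      · have := ih h; omega
  | later A ih => simp [GTy.subst, GTy.us]
  | box A => simp [GTy.subst]
end

section
/- The call-by-name reduction relation of the guarded lambda calculus is deterministic: if E[t] ↦ u and E[t] ↦ u′ via the evaluation-context closure of the reduction rules, then u = u′. -/
/-- Terms of the guarded lambda calculus, with named variables.  Explicit
substitutions `σ` (attached to `prev` and `box`) are lists of (variable, term)
pairs. -/
inductive Tm : Type
  | var (x : ℕ)
  | zero
  | succ (t : Tm)
  | unit
  | pair (t u : Tm)
  | fst (t : Tm)
  | snd (t : Tm)
  | abort (t : Tm)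
  | inl (t : Tm)
  | inr (t : Tm)
  | case (t : Tm) (x1 : ℕ) (t1 : Tm) (x2 : ℕ) (t2 : Tm)
  | lam (x : ℕ) (t : Tm)
  | app (t u : Tm)
  | fold (t : Tm)
  | unfold (t : Tm)
  | next (t : Tm)
  | prev (s : List (ℕ × Tm)) (t : Tm)
  | ap (t u : Tm)
  | box (s : List (ℕ × Tm)) (t : Tm)
  | unbox (t : Tm)

/-- Simultaneous substitution of an environment `r` (a partial map from variables
to terms) into a term.  `prev[x⃗←t⃗].t` and `box[x⃗←t⃗].t` bind all the variables
`x⃗` in `t` (but not in `t⃗`), so substitution acts only on the attached explicit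
substitution. -/
def Tm.msubst (r : ℕ → Option Tm) : Tm → Tm
  | .var x => (r x).getD (.var x)
  | .zero => .zero
  | .succ t => .succ (t.msubst r)
  | .unit => .unit
  | .pair t u => .pair (t.msubst r) (u.msubst r)
  | .fst t => .fst (t.msubst r)
  | .snd t => .snd (t.msubst r)
  | .abort t => .abort (t.msubst r)
  | .inl t => .inl (t.msubst r)
  | .inr t => .inr (t.msubst r)
  | .case t x1 t1 x2 t2 =>
      .case (t.msubst r)
        x1 (t1.msubst (fun y => if y = x1 then none else r y))
        x2 (t2.msubst (fun y => if y = x2 then none else r y))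
  | .lam x t => .lam x (t.msubst (fun y => if y = x then none else r y))
  | .app t u => .app (t.msubst r) (u.msubst r)
  | .fold t => .fold (t.msubst r)
  | .unfold t => .unfold (t.msubst r)
  | .next t => .next (t.msubst r)
  | .prev s t => .prev (s.attach.map (fun p => (p.1.1, p.1.2.msubst r))) t
  | .ap t u => .ap (t.msubst r) (u.msubst r)
  | .box s t => .box (s.attach.map (fun p => (p.1.1, p.1.2.msubst r))) t
  | .unbox t => .unbox (t.msubst r)
termination_by t => sizeOf t
decreasing_by
  all_goals simp_wf
  all_goals try omega
  all_goals
    obtain ⟨⟨a, b⟩, hp⟩ := p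
  all_goals
    have := List.sizeOf_lt_of_mem hp
  all_goals
    simp at this ⊢
  all_goals omega

/-- Single substitution `t[u/x]`. -/
def Tm.sub1 (t u : Tm) (x : ℕ) : Tm :=
  t.msubst (fun y => if y = x then some u else none)

/-- Simultaneous substitution `t[t⃗/x⃗]` induced by an explicit substitution. -/
def Tm.subList (s : List (ℕ × Tm)) (t : Tm) : Tm :=
  t.msubst (fun y => (s.find? (fun p => p.1 = y)).map Prod.snd)

/-- Numerals `succⁿ zero`. -/
inductive IsNumeral : Tm → Prop
  | zero : IsNumeral .zero
  | succ {t : Tm} : IsNumeral t → IsNumeral (.succ t)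

/-- Values of the guarded lambda calculus. -/
inductive IsValue : Tm → Prop
  | num {t : Tm} : IsNumeral t → IsValue t
  | unit : IsValue .unit
  | pair (t u : Tm) : IsValue (.pair t u)
  | inl (t : Tm) : IsValue (.inl t)
  | inr (t : Tm) : IsValue (.inr t)
  | lam (x : ℕ) (t : Tm) : IsValue (.lam x t)
  | fold (t : Tm) : IsValue (.fold t)
  | next (t : Tm) : IsValue (.next t)
  | box (s : List (ℕ × Tm)) (t : Tm) : IsValue (.box s t)

/-- The basic reduction rules of the guarded lambda calculus. -/
inductive HeadRed : Tm → Tm → Prop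
  | fstR (t1 t2 : Tm) : HeadRed (.fst (.pair t1 t2)) t1
  | sndR (t1 t2 : Tm) : HeadRed (.snd (.pair t1 t2)) t2
  | caseL (t : Tm) (x1 : ℕ) (t1 : Tm) (x2 : ℕ) (t2 : Tm) :
      HeadRed (.case (.inl t) x1 t1 x2 t2) (t1.sub1 t x1)
  | caseR (t : Tm) (x1 : ℕ) (t1 : Tm) (x2 : ℕ) (t2 : Tm) :
      HeadRed (.case (.inr t) x1 t1 x2 t2) (t2.sub1 t x2)
  | beta (x : ℕ) (t1 t2 : Tm) : HeadRed (.app (.lam x t1) t2) (t1.sub1 t2 x)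
  | unfoldFold (t : Tm) : HeadRed (.unfold (.fold t)) t
  | prevSub (s : List (ℕ × Tm)) (t : Tm) (hs : s ≠ []) :
      HeadRed (.prev s t) (.prev [] (Tm.subList s t))
  | prevNext (t : Tm) : HeadRed (.prev [] (.next t)) t
  | apNext (t1 t2 : Tm) : HeadRed (.ap (.next t1) (.next t2)) (.next (.app t1 t2))
  | unboxBox (s : List (ℕ × Tm)) (t : Tm) :
      HeadRed (.unbox (.box s t)) (Tm.subList s t)

/-- Evaluation contexts.  In `v ⊛ E` the left component must be a value. -/
inductive Ctx : Type
  | hole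
  | succC (E : Ctx)
  | fstC (E : Ctx)
  | sndC (E : Ctx)
  | caseC (E : Ctx) (x1 : ℕ) (t1 : Tm) (x2 : ℕ) (t2 : Tm)
  | appC (E : Ctx) (u : Tm)
  | unfoldC (E : Ctx)
  | prevC (E : Ctx)
  | apL (E : Ctx) (u : Tm)
  | apV (v : Tm) (hv : IsValue v) (E : Ctx)
  | unboxC (E : Ctx)

/-- Plugging a term into an evaluation context. -/
def Ctx.plug : Ctx → Tm → Tm
  | .hole, t => t
  | .succC E, t => .succ (E.plug t)
  | .fstC E, t => .fst (E.plug t)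
  | .sndC E, t => .snd (E.plug t)
  | .caseC E x1 t1 x2 t2, t => .case (E.plug t) x1 t1 x2 t2
  | .appC E u, t => .app (E.plug t) u
  | .unfoldC E, t => .unfold (E.plug t)
  | .prevC E, t => .prev [] (E.plug t)
  | .apL E u, t => .ap (E.plug t) u
  | .apV v _ E, t => .ap v (E.plug t)
  | .unboxC E, t => .unbox (E.plug t)

/-- Call-by-name reduction: `E[t] ↦ E[u]` for a reduction rule `t ↦ u` and an
evaluation context `E`. -/
def Step (a b : Tm) : Prop :=
  ∃ (E : Ctx) (t u : Tm), HeadRed t u ∧ a = E.plug t ∧ b = E.plug u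


/-- Auxiliary for the `ap` case of `step?`. -/
def apStep (t u : Tm) (st su : Option Tm) : Option Tm :=
  match t, u with
  | .next t1, .next t2 => some (.next (.app t1 t2))
  | _, _ =>
      match st with
      | some t' => some (.ap t' u)
      | none => su.map (.ap t)

/-- A (liberal) one-step evaluation function: redexes are prioritized. -/
def step? : Tm → Option Tm
  | .succ t => (step? t).map .succ
  | .fst (.pair a _) => some a
  | .fst t => (step? t).map .fst
  | .snd (.pair _ b) => some b
  | .snd t => (step? t).map .snd
  | .case (.inl t) x1 t1 _ _ => some (t1.sub1 t x1)
  | .case (.inr t) _ _ x2 t2 => some (t2.sub1 t x2)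
  | .case t x1 t1 x2 t2 => (step? t).map (fun t' => .case t' x1 t1 x2 t2)
  | .app (.lam x t1) t2 => some (t1.sub1 t2 x)
  | .app t u => (step? t).map (fun t' => .app t' u)
  | .unfold (.fold t) => some t
  | .unfold t => (step? t).map .unfold
  | .prev [] (.next t) => some t
  | .prev [] t => (step? t).map (.prev [])
  | .prev s t => some (.prev [] (Tm.subList s t))
  | .ap t u => apStep t u (step? t) (step? u)
  | .unbox (.box s t) => some (Tm.subList s t)
  | .unbox t => (step? t).map .unbox
  | _ => none

lemma numeral_step? {t : Tm} (h : IsNumeral t) : step? t = none := by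
  induction h <;> simp [step?, *]

lemma value_step? {t : Tm} (h : IsValue t) : step? t = none := by
  cases h with
  | num hn => exact numeral_step? hn
  | _ => simp [step?]

lemma head_not_value {t u : Tm} (h : HeadRed t u) : ¬ IsValue t := by
  intro hv
  cases h <;> cases hv <;> rename_i hn <;> cases hn

lemma plug_not_value (E : Ctx) {t u : Tm} (h : HeadRed t u) :
    ¬ IsValue (E.plug t) := by
  induction E with
  | hole => exact head_not_value h
  | succC E ih =>
      intro hv
      cases hv with
      | num hn => cases hn with | succ hn' => exact ih (IsValue.num hn')
  | _ =>
      intro hv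
      cases hv <;> rename_i hn <;> cases hn

lemma step?_fst {t : Tm} (h : ∀ a b, t ≠ .pair a b) :
    step? (.fst t) = (step? t).map .fst := by
  cases t <;> simp_all [step?]

lemma step?_snd {t : Tm} (h : ∀ a b, t ≠ .pair a b) :
    step? (.snd t) = (step? t).map .snd := by
  cases t <;> simp_all [step?]

lemma step?_case {t : Tm} (x1 : ℕ) (t1 : Tm) (x2 : ℕ) (t2 : Tm)
    (h1 : ∀ a, t ≠ .inl a) (h2 : ∀ a, t ≠ .inr a) :
    step? (.case t x1 t1 x2 t2) = (step? t).map (fun t' => .case t' x1 t1 x2 t2) := by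
  cases t <;> simp_all [step?]

lemma step?_app {t : Tm} (u : Tm) (h : ∀ x a, t ≠ .lam x a) :
    step? (.app t u) = (step? t).map (fun t' => .app t' u) := by
  cases t <;> simp_all [step?]

lemma step?_unfold {t : Tm} (h : ∀ a, t ≠ .fold a) :
    step? (.unfold t) = (step? t).map .unfold := by
  cases t <;> simp_all [step?]

lemma step?_prev {t : Tm} (h : ∀ a, t ≠ .next a) :
    step? (.prev [] t) = (step? t).map (.prev []) := by
  cases t <;> simp_all [step?]

lemma step?_unbox {t : Tm} (h : ∀ s a, t ≠ .box s a) :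
    step? (.unbox t) = (step? t).map .unbox := by
  cases t <;> simp_all [step?]

lemma step?_ap {a b : Tm} (h : (∀ t2, b ≠ .next t2) ∨ (∀ t1, a ≠ .next t1))
    (st su : Option Tm) :
    apStep a b st su =
      match st with
      | some a' => some (.ap a' b)
      | none => su.map (.ap a) := by
  cases a with
  | next t1 =>
      cases b with
      | next t2 =>
          exfalso
          rcases h with h | h
          exacts [h t2 rfl, h t1 rfl]
      | _ => rfl
  | _ => cases b <;> rfl

lemma not_value_shapes {t : Tm} (h : ¬ IsValue t) :
    (∀ a b, t ≠ .pair a b) ∧ (∀ a, t ≠ .inl a) ∧ (∀ a, t ≠ .inr a) ∧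
    (∀ x a, t ≠ .lam x a) ∧ (∀ a, t ≠ .fold a) ∧ (∀ a, t ≠ .next a) ∧
    (∀ s a, t ≠ .box s a) := by
  exact ⟨fun a b hab => h (hab ▸ IsValue.pair a b),
    fun a ha => h (ha ▸ IsValue.inl a),
    fun a ha => h (ha ▸ IsValue.inr a),
    fun x a ha => h (ha ▸ IsValue.lam x a),
    fun a ha => h (ha ▸ IsValue.fold a),
    fun a ha => h (ha ▸ IsValue.next a),
    fun s a ha => h (ha ▸ IsValue.box s a)⟩

lemma plug_step (E : Ctx) {t u : Tm} (h : HeadRed t u) :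
    step? (E.plug t) = some (E.plug u) := by
  induction E with
  | hole =>
      cases h with
      | prevSub s t hs => cases s with
        | nil => exact absurd rfl hs
        | cons p s => simp [Ctx.plug, step?]
      | _ => simp [Ctx.plug, step?, apStep]
  | succC E ih => simp [Ctx.plug, step?, ih]
  | fstC E ih =>
      obtain ⟨h1, _⟩ := not_value_shapes (plug_not_value E h)
      simp [Ctx.plug, step?_fst h1, ih]
  | sndC E ih =>
      obtain ⟨h1, _⟩ := not_value_shapes (plug_not_value E h)
      simp [Ctx.plug, step?_snd h1, ih]
  | caseC E x1 t1 x2 t2 ih =>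
      obtain ⟨-, h2, h3, -⟩ := not_value_shapes (plug_not_value E h)
      simp [Ctx.plug, step?_case x1 t1 x2 t2 h2 h3, ih]
  | appC E u ih =>
      obtain ⟨-, -, -, h4, -⟩ := not_value_shapes (plug_not_value E h)
      simp [Ctx.plug, step?_app u h4, ih]
  | unfoldC E ih =>
      obtain ⟨-, -, -, -, h5, -⟩ := not_value_shapes (plug_not_value E h)
      simp [Ctx.plug, step?_unfold h5, ih]
  | prevC E ih =>
      obtain ⟨-, -, -, -, -, h6, -⟩ := not_value_shapes (plug_not_value E h)
      simp [Ctx.plug, step?_prev h6, ih]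
  | apL E u ih =>
      obtain ⟨-, -, -, -, -, h6, -⟩ := not_value_shapes (plug_not_value E h)
      show apStep _ _ _ _ = _
      rw [step?_ap (Or.inr h6), ih]
      rfl
  | apV v hv E ih =>
      obtain ⟨-, -, -, -, -, h6, -⟩ := not_value_shapes (plug_not_value E h)
      show apStep _ _ _ _ = _
      rw [step?_ap (Or.inl h6), value_step? hv, ih]
      rfl
  | unboxC E ih =>
      obtain ⟨-, -, -, -, -, -, h7⟩ := not_value_shapes (plug_not_value E h)
      simp [Ctx.plug, step?_unbox h7, ih]

lemma step_step? {a b : Tm} (h : Step a b) : step? a = some b := by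
  obtain ⟨E, t, u, hr, rfl, rfl⟩ := h
  exact plug_step E hr

/-- Call-by-name reduction of the guarded lambda calculus is deterministic. -/
theorem step_deterministic (a b b' : Tm) (h : Step a b) (h' : Step a b') : b = b' := by
  have hb := step_step? h
  have hb' := step_step? h'
  rw [hb] at hb'
  exact Option.some.inj hb'
end

section
/- In the internal logic of the topos of trees, the later modality ▷ on the subobject classifier Ω, given at stage n by ▷ₙ(k) = min(n, k+1) on Ωₙ = {0,…,n}, satisfies the Löb rule: for any proposition φ : X → Ω, if ▷φ ≤ φ in Sub(X), then φ = ⊤. -/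
open CategoryTheory

structure TObj : Type 1 where
  X : ℕ → Type
  res : ∀ n, X (n+1) → X n

@[ext]
structure THom (A B : TObj) : Type where
  app : ∀ n, A.X n → B.X n
  nat : ∀ n (x : A.X (n+1)), app n (A.res n x) = B.res n (app (n+1) x)

instance : Category TObj where
  Hom := THom
  id A := ⟨fun _ x => x, fun _ _ => rfl⟩
  comp f g := ⟨fun n x => g.app n (f.app n x), fun n x => by (try dsimp only); rw [f.nat, g.nat]⟩
  id_comp f := rfl
  comp_id f := rfl
  assoc f g h := rfl

def Delta (Z : Type) : TObj := ⟨fun _ => Z, fun _ z => z⟩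

def LaterX (A : TObj) : ℕ → Type
  | 0 => PUnit
  | n+1 => A.X n

def LaterRes (A : TObj) : ∀ n, LaterX A (n+1) → LaterX A n
  | 0 => fun _ => PUnit.unit
  | n+1 => A.res n

def LaterObj (A : TObj) : TObj := ⟨LaterX A, LaterRes A⟩

def LaterMap {A B : TObj} (f : A ⟶ B) : LaterObj A ⟶ LaterObj B where
  app := fun n => match n with
    | 0 => fun _ => PUnit.unit
    | n+1 => f.app n
  nat := fun n => match n with
    | 0 => fun _ => rfl
    | n+1 => fun x => f.nat n x

def nextT (A : TObj) : A ⟶ LaterObj A where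
  app := fun n => match n with
    | 0 => fun _ => PUnit.unit
    | n+1 => A.res n
  nat := fun n => match n with
    | 0 => fun _ => rfl
    | n+1 => fun _ => rfl

def toUnitT (A : TObj) : A ⟶ Delta PUnit := ⟨fun _ _ => PUnit.unit, fun _ _ => rfl⟩

def OmegaObj : TObj where
  X := fun n => Fin (n+2)
  res := fun n k => ⟨min (n+1) k.val, by omega⟩

def trueT : Delta PUnit ⟶ OmegaObj where
  app := fun n _ => ⟨n+1, by omega⟩
  nat := fun n _ => by
    apply Fin.ext
    show n+1 = min (n+1) (n+2)
    omega

def topT (X : TObj) : X ⟶ OmegaObj where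
  app := fun n _ => ⟨n+1, by omega⟩
  nat := fun n _ => by
    apply Fin.ext
    show n+1 = min (n+1) (n+2)
    omega

def laterOmega : OmegaObj ⟶ OmegaObj where
  app := fun n k => ⟨min (n+1) (k.val+1), by omega⟩
  nat := fun n k => by
    apply Fin.ext
    show min (n+1) (min (n+1) k.val + 1) = min (n+1) (min (n+2) (k.val+1))
    omega

def nnOmega : OmegaObj ⟶ OmegaObj where
  app := fun n k => ⟨if k.val = 0 then 0 else n+1, by split <;> omega⟩
  nat := fun n k => by
    apply Fin.ext
    show (if min (n+1) k.val = 0 then 0 else n+1) = min (n+1) (if k.val = 0 then 0 else n+2)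
    rcases Nat.eq_zero_or_pos k.val with h | h
    · simp [h]
    · rw [if_neg (by omega), if_neg (by omega)]; omega

def ProdObj (A B : TObj) : TObj :=
  ⟨fun n => A.X n × B.X n, fun n p => (A.res n p.1, B.res n p.2)⟩

def proj1 (A B : TObj) : ProdObj A B ⟶ A := ⟨fun _ p => p.1, fun _ _ => rfl⟩
def proj2 (A B : TObj) : ProdObj A B ⟶ B := ⟨fun _ p => p.2, fun _ _ => rfl⟩

def pairT {C A B : TObj} (f : C ⟶ A) (g : C ⟶ B) : C ⟶ ProdObj A B where
  app := fun n x => (f.app n x, g.app n x)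
  nat := fun n x => by
    try dsimp only
    show _ = (A.res n (f.app (n+1) x), B.res n (g.app (n+1) x))
    rw [f.nat, g.nat]

def canProd (A B : TObj) : LaterObj (ProdObj A B) ⟶ ProdObj (LaterObj A) (LaterObj B) :=
  pairT (LaterMap (proj1 A B)) (LaterMap (proj2 A B))

def ExpObj (X Y : TObj) : TObj where
  X := fun n => {f : ∀ k, k ≤ n → X.X k → Y.X k //
    ∀ k (h : k+1 ≤ n) (x : X.X (k+1)),
      f k (Nat.le_of_succ_le h) (X.res k x) = Y.res k (f (k+1) h x)}
  res := fun n f =>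
    ⟨fun k h => f.1 k (h.trans (Nat.le_succ n)),
     fun k h x => f.2 k (h.trans (Nat.le_succ n)) x⟩

def limE {X Y : TObj} (g : Delta PUnit ⟶ ExpObj X Y) :
    (Delta PUnit ⟶ X) → (Delta PUnit ⟶ Y) := fun x =>
  { app := fun n u => (g.app n u).1 n (le_refl n) (x.app n u)
    nat := fun n u => by
      have hg : g.app n u = (ExpObj X Y).res n (g.app (n+1) u) := g.nat n u
      have hx : x.app n u = X.res n (x.app (n+1) u) := x.nat n u
      show (g.app n u).1 n (le_refl n) (x.app n u) =
        Y.res n ((g.app (n+1) u).1 (n+1) (le_refl (n+1)) (x.app (n+1) u))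
      rw [hg, hx]
      exact (g.app (n+1) u).2 n (le_refl (n+1)) (x.app (n+1) u) }


instance (n : ℕ) : LinearOrder (OmegaObj.X n) :=
  inferInstanceAs (LinearOrder (Fin (n+2)))

lemma topT_app (A : TObj) (n : ℕ) (x : A.X n) : (topT A).app n x = Fin.last (n+1) :=
  rfl

/-- No induction is needed for Löb's rule in the topos of trees: already stagewise, `▷ₙ k = k + 1`
exceeds `k` unless `k` is the top truth value. -/
lemma laterOmega_app_le_self_iff (n : ℕ) (k : Fin (n+2)) :
    laterOmega.app n k ≤ k ↔ k = Fin.last (n+1) := by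
  rw [Fin.ext_iff, Fin.val_last]
  change min (n+1) (k.val+1) ≤ k.val ↔ _
  have := k.isLt
  omega

/-- Löb rule in the internal logic of the topos of trees: for any proposition
`φ : X → Ω`, if `▷φ ≤ φ` (pointwise in `Sub(X)`) then `φ = ⊤`. -/
theorem loeb_rule (A : TObj) (phi : A ⟶ OmegaObj)
    (h : ∀ n (x : A.X n), (phi ≫ laterOmega).app n x ≤ phi.app n x) :
    phi = topT A := by
  refine THom.ext (funext₂ fun n x => ?_)
  exact ((laterOmega_app_le_self_iff n _).1 (h n x)).trans (topT_app A n x).symm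
end

section
/- Let X, Y be objects of the topos of trees presented as sheaves over ω + 1 (so that Γ(Z) = Z(ω) is the limit stage), let F : ▶(Yˣ) → Yˣ be a morphism and F̲ : Y(ω)^{X(ω)} → Y(ω)^{X(ω)} a function such that lim ∘ Γ(F) = F̲ ∘ lim, where lim({g_ν}_{ν≤ω}) = g_ω. If u : 1 → Yˣ is the unique fixed point of F (i.e., F ∘ next ∘ u = u), then u_ω(∗)_ω is a fixed point of F̲. -/
open CategoryTheory

/-- If `F : ▶(Yˣ) ⟶ Yˣ` is a morphism in the topos of trees and `F̲` is a function
on `Y(ω)^{X(ω)}` (functions between global sections) such that `lim ∘ Γ(F) = F̲ ∘ lim`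
(where `Γ(▶(Yˣ)) = Γ(Yˣ)` via `next`, whose `ω`-component is the identity), then the
image under `lim` of any fixed point `u : 1 ⟶ Yˣ` of `F` is a fixed point of `F̲`. -/
theorem fixedPoint_mapped_to_fixedPoint (X Y : TObj)
    (F : LaterObj (ExpObj X Y) ⟶ ExpObj X Y)
    (Fbar : ((Delta PUnit ⟶ X) → (Delta PUnit ⟶ Y)) →
            ((Delta PUnit ⟶ X) → (Delta PUnit ⟶ Y)))
    (hcomm : ∀ g : Delta PUnit ⟶ ExpObj X Y,
        limE ((g ≫ nextT (ExpObj X Y)) ≫ F) = Fbar (limE g))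
    (u : Delta PUnit ⟶ ExpObj X Y)
    (hfix : (u ≫ nextT (ExpObj X Y)) ≫ F = u) :
    Fbar (limE u) = limE u :=
  calc Fbar (limE u) = limE ((u ≫ nextT (ExpObj X Y)) ≫ F) := (hcomm u).symm
    _ = limE u := congrArg limE hfix
end
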